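/- Let (S_n) be a random walk with i.i.d. increments whose law is ν. Suppose G : ℝ → ℝ is a right-continuous bounded function satisfying G(x) = E[G(x + S₁)] for all x ∈ ℝ. Then G(x + a) = G(x) for every x ∈ ℝ and every a in the support of ν; in particular, if the walk is nonarithmetic (the closed subgroup generated by the support of ν is all of ℝ), then G is constant, and if the walk is d-arithmetic (that subgroup equals dℤ), then G is d-periodic. -/

import Mathlib

open MeasureTheory Filter Set Topology

/-! Averaging `G` over the windows `[z, z + δ]` gives bounded harmonic functions that are
Lipschitz and recover `G` as `δ → 0⁺` by right-continuity, so it suffices to treat a bounded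
Lipschitz harmonic `F`. If `h = F (· + a) - F` had a positive supremum `M`, then, since the ball
around `a` has positive `ν`-mass, harmonicity lets one move from a point where `h` is nearly `M`
by a step close to `a` to another such point; each step raises `F` by about `M`, contradicting
boundedness. The periods of a right-continuous function form a closed subgroup, which therefore
contains the closed subgroup generated by the support of `ν`. -/

theorem measurable_of_continuousWithinAt_Ici {β : Type*} [TopologicalSpace β]
    [TopologicalSpace.PseudoMetrizableSpace β] [MeasurableSpace β] [BorelSpace β]
    {G : ℝ → β} (hG : ∀ x, ContinuousWithinAt G (Ici x) x) : Measurable G := by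
  -- `G` is the pointwise limit of `G` sampled at the grid points `⌈x (n + 1)⌉ / (n + 1) ≥ x`
  have hpos (n : ℕ) : (0 : ℝ) < n + 1 := n.cast_add_one_pos
  refine measurable_of_tendsto_metrizable
    (f := fun (n : ℕ) x => G (⌈x * ((n : ℝ) + 1)⌉ / ((n : ℝ) + 1))) (fun n => ?_)
    (tendsto_pi_nhds.2 fun x => ?_)
  · exact (measurable_from_top (f := fun k : ℤ => G (k / ((n : ℝ) + 1)))).comp
      (Int.measurable_ceil.comp (measurable_id.mul_const _))
  · refine (hG x).tendsto.comp (tendsto_nhdsWithin_iff.2 ⟨?_, .of_forall fun n => ?_⟩)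
    · refine tendsto_of_tendsto_of_tendsto_of_le_of_le tendsto_const_nhds
        (by simpa using tendsto_one_div_add_atTop_nhds_zero_nat.const_add x)
        (fun n => ?_) (fun n => ?_)
      · exact (le_div_iff₀ (hpos n)).2 (Int.le_ceil _)
      · rw [div_le_iff₀ (hpos n), add_mul, inv_mul_cancel₀ (hpos n).ne']
        exact (Int.ceil_lt_add_one _).le
    · exact (le_div_iff₀ (hpos n)).2 (Int.le_ceil _)

theorem integrable_comp_add_of_abs_le {ν : Measure ℝ} [IsFiniteMeasure ν] {F : ℝ → ℝ}
    (hF : Measurable F) {B : ℝ} (hB : ∀ z, |F z| ≤ B) (z : ℝ) :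
    Integrable (fun y => F (z + y)) ν :=
  .of_bound (hF.comp (measurable_const_add z)).aestronglyMeasurable B (.of_forall fun _ => hB _)

theorem exists_add_mul_le_of_step {α : Type*} {F : α → ℝ} {P : ℕ → α → Prop} {c : ℝ}
    (step : ∀ n z, P (n + 1) z → ∃ y, P n y ∧ F z + c ≤ F y) (n : ℕ) (z : α)
    (hz : P n z) : ∃ w, F z + n * c ≤ F w := by
  induction n generalizing z with
  | zero => exact ⟨z, by simp⟩
  | succ n ih =>
    obtain ⟨y, hy, hFy⟩ := step n z hz
    obtain ⟨w, hw⟩ := ih y hy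
    exact ⟨w, by push_cast; linarith⟩

def IsHarmonic (ν : Measure ℝ) (F : ℝ → ℝ) : Prop :=
  ∀ x, F x = ∫ y, F (x + y) ∂ν

namespace IsHarmonic

variable {ν : Measure ℝ} {F : ℝ → ℝ}

theorem neg (hF : IsHarmonic ν F) : IsHarmonic ν (-F) := fun x => by
  simp only [Pi.neg_apply, integral_neg, ← hF x]

theorem sub_comp_add_right (hF : IsHarmonic ν F) (hint : ∀ z, Integrable (fun y => F (z + y)) ν)
    (a : ℝ) : IsHarmonic ν (fun z => F (z + a) - F z) := fun z => by
  have hshift : (fun y => F (z + y + a)) = fun y => F (z + a + y) := by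
    ext y; rw [add_right_comm]
  rw [integral_sub (by rw [hshift]; exact hint _) (hint z), hshift, ← hF, ← hF]

theorem exists_mem_lt_of_le [IsProbabilityMeasure ν] (hF : IsHarmonic ν F) {M η : ℝ}
    (hle : ∀ z, F z ≤ M) {z : ℝ} (hint : Integrable (fun y => F (z + y)) ν)
    (hz : M - η < F z) {I : Set ℝ} (hI : MeasurableSet I) (hpos : 0 < ν.real I) :
    ∃ y ∈ I, M - η / ν.real I < F (z + y) := by
  by_contra! hsmall
  have hgap : Integrable (fun y => M - F (z + y)) ν := (integrable_const M).sub hint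
  have hη : η ≤ M - F z := calc
    η = ν.real I • (η / ν.real I) := by rw [smul_eq_mul, mul_div_cancel₀ _ hpos.ne']
    _ ≤ ∫ y in I, M - F (z + y) ∂ν :=
        setIntegral_ge_of_const_le hI (measure_ne_top ν I)
          (fun y hy => by linarith [hsmall y hy]) hgap.integrableOn
    _ ≤ ∫ y, M - F (z + y) ∂ν :=
        setIntegral_le_integral hgap (.of_forall fun y => sub_nonneg.2 (hle _))
    _ = M - F z := by rw [integral_sub (integrable_const M) hint, hF z]; simp
  linarith

theorem exists_near_sup_step_of_lipschitzWith [IsProbabilityMeasure ν] (hF : IsHarmonic ν F)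
    {K : NNReal} (hFK : LipschitzWith K F) {B : ℝ} (hB : ∀ z, |F z| ≤ B) {a M : ℝ}
    (hle : ∀ z, F (z + a) - F z ≤ M) {r : ℝ} (hr : 0 < ν.real (Metric.ball a r)) {η z : ℝ}
    (hz : M - η < F (z + a) - F z) :
    ∃ z', M - η / ν.real (Metric.ball a r) < F (z' + a) - F z' ∧
      F z + (M - η - K * r) ≤ F z' := by
  have hint := integrable_comp_add_of_abs_le (ν := ν) hFK.continuous.measurable hB
  have hsub_bd (z : ℝ) : |F (z + a) - F z| ≤ 2 * B := by
    linarith [abs_sub (F (z + a)) (F z), hB (z + a), hB z]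
  have hsub_int := integrable_comp_add_of_abs_le (ν := ν)
    ((hFK.continuous.comp (continuous_add_const a)).sub hFK.continuous).measurable hsub_bd z
  obtain ⟨y, hy, hlt⟩ := (hF.sub_comp_add_right hint a).exists_mem_lt_of_le hle hsub_int hz
    Metric.isOpen_ball.measurableSet hr
  refine ⟨z + y, hlt, ?_⟩
  have hlip : dist (F (z + y)) (F (z + a)) ≤ K * r := calc
    _ ≤ K * dist (z + y) (z + a) := hFK.dist_le_mul _ _
    _ ≤ K * r := by rw [dist_add_left]; exact mul_le_mul_of_nonneg_left hy.le K.coe_nonneg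
  linarith [abs_le.1 (Real.dist_eq _ _ ▸ hlip)]

theorem add_le_of_lipschitzWith [IsProbabilityMeasure ν] (hF : IsHarmonic ν F) {K : NNReal}
    (hFK : LipschitzWith K F) {B : ℝ} (hB : ∀ z, |F z| ≤ B) {a : ℝ}
    (ha : ∀ r > 0, 0 < ν (Ioo (a - r) (a + r))) (x : ℝ) : F (x + a) ≤ F x := by
  have hbdd : BddAbove (range fun z => F (z + a) - F z) := ⟨2 * B, by
    rintro _ ⟨z, rfl⟩; linarith [abs_le.1 (hB (z + a)), abs_le.1 (hB z)]⟩
  set M := ⨆ z, F (z + a) - F z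
  have hle (z : ℝ) : F (z + a) - F z ≤ M := le_ciSup hbdd z
  by_contra! hx
  have hM : 0 < M := (sub_pos.2 hx).trans_le (hle x)
  set r := M / (4 * (K + 1))
  have hKr : K * r ≤ M / 4 := by
    rw [mul_div_assoc', div_le_div_iff₀ (by positivity) (by norm_num)]
    nlinarith [K.coe_nonneg]
  set p := ν.real (Metric.ball a r)
  have hp : 0 < p := ENNReal.toReal_pos
    (by simpa [Real.ball_eq_Ioo] using (ha r (by positivity)).ne') (measure_ne_top ν _)
  -- each step costs a factor `p` in the tolerance, see `exists_mem_lt_of_le`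
  have step (n : ℕ) (z : ℝ) (hz : M - M / 4 * p ^ (n + 1) < F (z + a) - F z) :
      ∃ z', M - M / 4 * p ^ n < F (z' + a) - F z' ∧ F z + M / 2 ≤ F z' := by
    obtain ⟨z', hz', hFz'⟩ := hF.exists_near_sup_step_of_lipschitzWith hFK hB hle hp hz
    refine ⟨z', by rwa [pow_succ, ← mul_assoc, mul_div_cancel_right₀ _ hp.ne'] at hz', ?_⟩
    have hpow : M / 4 * p ^ (n + 1) ≤ M / 4 :=
      mul_le_of_le_one_right (by positivity) (pow_le_one₀ hp.le measureReal_le_one)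
    linarith
  obtain ⟨n, hn⟩ := exists_nat_gt (4 * B / M)
  obtain ⟨z, hz⟩ := exists_lt_of_lt_ciSup (show M - M / 4 * p ^ n < M by
    have : 0 < M / 4 * p ^ n := by positivity
    linarith)
  obtain ⟨w, hw⟩ := exists_add_mul_le_of_step
    (P := fun n z => M - M / 4 * p ^ n < F (z + a) - F z) step n z hz
  rw [div_lt_iff₀ hM] at hn
  linarith [abs_le.1 (hB z), abs_le.1 (hB w)]

theorem add_eq_of_lipschitzWith [IsProbabilityMeasure ν] (hF : IsHarmonic ν F) {K : NNReal}
    (hFK : LipschitzWith K F) {B : ℝ} (hB : ∀ z, |F z| ≤ B) {a : ℝ}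
    (ha : ∀ r > 0, 0 < ν (Ioo (a - r) (a + r))) (x : ℝ) : F (x + a) = F x := by
  have := hF.neg.add_le_of_lipschitzWith hFK.neg (by simpa using hB) ha x
  exact le_antisymm (hF.add_le_of_lipschitzWith hFK hB ha x) (by simpa using this)

end IsHarmonic

section Window

variable {G : ℝ → ℝ} {C : ℝ}

theorem intervalIntegrable_of_abs_le (hGm : Measurable G) (hC : ∀ x, |G x| ≤ C) (u v : ℝ) :
    IntervalIntegrable G volume u v :=
  (intervalIntegrable_const (c := C)).mono_fun hGm.aestronglyMeasurable
    (.of_forall fun x => (hC x).trans (le_abs_self C))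

theorem abs_integral_window_le (hC : ∀ x, |G x| ≤ C) (z δ : ℝ) :
    |∫ v in z..z + δ, G v| ≤ C * |δ| := by
  simpa using intervalIntegral.norm_integral_le_of_norm_le_const (a := z) (b := z + δ)
    fun x _ => (Real.norm_eq_abs _).trans_le (hC x)

theorem lipschitzWith_integral_window (hGm : Measurable G) {C : NNReal} (hC : ∀ x, |G x| ≤ C)
    (δ : ℝ) : LipschitzWith (2 * C) (fun z => ∫ v in z..z + δ, G v) := by
  have hint := intervalIntegrable_of_abs_le hGm hC
  refine LipschitzWith.of_dist_le_mul fun u w => ?_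
  rw [Real.dist_eq, Real.dist_eq,
    intervalIntegral.integral_interval_sub_interval_comm (hint _ _) (hint _ _) (hint _ _)]
  have h₁ := abs_integral_window_le hC u (w - u)
  have h₂ := abs_integral_window_le hC (u + δ) (w - u)
  rw [add_sub_cancel, abs_sub_comm] at h₁
  rw [show u + δ + (w - u) = w + δ by ring, abs_sub_comm] at h₂
  push_cast
  linarith [abs_sub (∫ v in u..w, G v) (∫ v in u + δ..w + δ, G v)]

theorem IsHarmonic.integral_window {ν : Measure ℝ} [IsFiniteMeasure ν] (hG : IsHarmonic ν G)
    (hGm : Measurable G) (hC : ∀ x, |G x| ≤ C) {δ : ℝ} (hδ : 0 ≤ δ) :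
    IsHarmonic ν (fun z => ∫ v in z..z + δ, G v) := fun z => by
  have hbox : IsFiniteMeasure (volume.restrict (Ioc z (z + δ))) :=
    isFiniteMeasure_restrict.2 measure_Ioc_lt_top.ne
  have hprod : Integrable (fun q : ℝ × ℝ => G (q.1 + q.2))
      ((volume.restrict (Ioc z (z + δ))).prod ν) :=
    .of_bound (hGm.comp measurable_add).aestronglyMeasurable C (.of_forall fun q => hC _)
  calc ∫ v in z..z + δ, G v
      = ∫ v in Ioc z (z + δ), (∫ y, G (v + y) ∂ν) := by
        rw [intervalIntegral.integral_of_le (by linarith)]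
        exact setIntegral_congr_fun measurableSet_Ioc fun v _ => hG v
    _ = ∫ y, (∫ v in Ioc z (z + δ), G (v + y)) ∂ν :=
        integral_integral_swap (f := fun v y => G (v + y)) hprod
    _ = ∫ y, (∫ v in z + y..z + y + δ, G v) ∂ν := by
        congr 1; ext y
        rw [← intervalIntegral.integral_of_le (μ := volume) (by linarith),
          intervalIntegral.integral_comp_add_right, add_right_comm]

theorem tendsto_inv_mul_integral_window (hGm : Measurable G) (hC : ∀ x, |G x| ≤ C) {z : ℝ}
    (hz : ContinuousWithinAt G (Ici z) z) :
    Tendsto (fun δ => δ⁻¹ * ∫ v in z..z + δ, G v) (𝓝[>] 0) (𝓝 (G z)) := by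
  have hderiv : HasDerivWithinAt (fun u => ∫ v in z..u, G v) (G z) (Ici z) z :=
    intervalIntegral.integral_hasDerivWithinAt_right (intervalIntegrable_of_abs_le hGm hC z z)
      hGm.stronglyMeasurable.stronglyMeasurableAtFilter (hz.mono Ioi_subset_Ici_self)
  rw [hasDerivWithinAt_iff_tendsto_slope, Ici_sdiff_left] at hderiv
  have hshift : Tendsto (fun δ : ℝ => z + δ) (𝓝[>] 0) (𝓝[>] z) := by
    simpa using (continuous_const_add z).continuousWithinAt.tendsto_nhdsWithin (x := 0)
      (s := Ioi 0) (t := Ioi z) fun δ (hδ : 0 < δ) => show z < z + δ by linarith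
  refine (hderiv.comp hshift).congr fun δ => ?_
  simp [slope_def_field, div_eq_inv_mul]

end Window

def periodAddSubgroup {β : Type*} (G : ℝ → β) : AddSubgroup ℝ where
  carrier := {t | Function.Periodic G t}
  zero_mem' := fun x => by rw [add_zero]
  add_mem' := Function.Periodic.add_period
  neg_mem' := Function.Periodic.neg

theorem isClosed_periodAddSubgroup {β : Type*} [TopologicalSpace β] [T1Space β] {G : ℝ → β}
    (hG : ∀ x, ContinuousWithinAt G (Ici x) x) : IsClosed (periodAddSubgroup G : Set ℝ) := by
  set P : Set ℝ := (periodAddSubgroup G : Set ℝ)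
  have of_right {t : ℝ} (ht : t ∈ closure (P ∩ Ici t)) : t ∈ P := fun x => by
    have hcont : ContinuousWithinAt (fun s => G (x + s)) (P ∩ Ici t) t :=
      ((hG (x + t)).comp (continuous_const_add x).continuousWithinAt
        fun s (hs : t ≤ s) => show x + t ≤ x + s by linarith).mono inter_subset_right
    have himage : (fun s => G (x + s)) '' (P ∩ Ici t) ⊆ {G x} := by
      rintro _ ⟨s, ⟨hs, -⟩, rfl⟩; exact hs x
    simpa using closure_minimal himage isClosed_singleton (hcont.mem_closure_image ht)
  refine closure_subset_iff_isClosed.1 fun t ht => ?_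
  rw [← inter_union_compl P (Ici t), closure_union] at ht
  rcases ht with ht | ht
  · exact of_right ht
  · have hneg : -t ∈ closure (P ∩ Ici (-t)) := by
      have ht' : -t ∈ closure (-(P ∩ (Ici t)ᶜ)) :=
        neg_closure (P ∩ (Ici t)ᶜ) ▸ neg_mem_neg.2 ht
      refine closure_mono (fun s (hs : -s ∈ P ∩ (Ici t)ᶜ) => (⟨?_, ?_⟩ : s ∈ P ∩ Ici (-t))) ht'
      · simpa [P] using neg_mem (hs.1 : -s ∈ periodAddSubgroup G)
      · have : -s < t := not_le.1 hs.2
        exact show -t ≤ s by linarith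
    simpa [P] using neg_mem (of_right hneg : -t ∈ periodAddSubgroup G)

theorem IsHarmonic.periodic_of_continuousWithinAt_Ici {ν : Measure ℝ} [IsProbabilityMeasure ν]
    {G : ℝ → ℝ} (hG : IsHarmonic ν G) (hGrc : ∀ x, ContinuousWithinAt G (Ici x) x)
    {C : ℝ} (hC : ∀ x, |G x| ≤ C) {a : ℝ} (ha : ∀ ε > 0, 0 < ν (Ioo (a - ε) (a + ε))) :
    Function.Periodic G a := by
  have hGm := measurable_of_continuousWithinAt_Ici hGrc
  have hC' (x : ℝ) : |G x| ≤ C.toNNReal := (hC x).trans (Real.le_coe_toNNReal C)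
  have hwindow (δ : ℝ) (hδ : 0 < δ) (z : ℝ) :
      ∫ v in z + a..z + a + δ, G v = ∫ v in z..z + δ, G v :=
    (hG.integral_window hGm hC hδ.le).add_eq_of_lipschitzWith
      (lipschitzWith_integral_window hGm hC' δ) (abs_integral_window_le hC · δ) ha z
  intro x
  refine tendsto_nhds_unique (tendsto_inv_mul_integral_window hGm hC (hGrc (x + a))) ?_
  refine (tendsto_inv_mul_integral_window hGm hC (hGrc x)).congr' ?_
  filter_upwards [self_mem_nhdsWithin] with δ hδ
  rw [hwindow δ hδ x]

/-- Choquet–Deny type lemma for bounded right-continuous harmonic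
functions of a random walk with increment law `ν`. -/
theorem stmt0 (ν : Measure ℝ) [IsProbabilityMeasure ν]
    (G : ℝ → ℝ)
    (hGrc : ∀ x, ContinuousWithinAt G (Ici x) x)
    (hGbd : ∃ C, ∀ x, |G x| ≤ C)
    (hharm : ∀ x, G x = ∫ y, G (x + y) ∂ν) :
    (∀ a, (∀ ε > 0, 0 < ν (Ioo (a - ε) (a + ε))) → ∀ x, G (x + a) = G x) ∧
    (closure ((AddSubgroup.closure {a : ℝ | ∀ ε > 0, 0 < ν (Ioo (a - ε) (a + ε))} : AddSubgroup ℝ) : Set ℝ)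
        = Set.univ → ∃ c, ∀ x, G x = c) ∧
    (∀ d : ℝ, closure ((AddSubgroup.closure {a : ℝ | ∀ ε > 0, 0 < ν (Ioo (a - ε) (a + ε))} : AddSubgroup ℝ) : Set ℝ)
        = ((AddSubgroup.zmultiples d : AddSubgroup ℝ) : Set ℝ) →
      ∀ x, G (x + d) = G x) := by
  obtain ⟨C, hC⟩ := hGbd
  have hsupp (a : ℝ) (ha : ∀ ε > 0, 0 < ν (Ioo (a - ε) (a + ε))) : Function.Periodic G a :=
    IsHarmonic.periodic_of_continuousWithinAt_Ici hharm hGrc hC ha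
  have hperiods : closure ((AddSubgroup.closure {a : ℝ | ∀ ε > 0, 0 < ν (Ioo (a - ε) (a + ε))} :
      AddSubgroup ℝ) : Set ℝ) ⊆ periodAddSubgroup G :=
    (isClosed_periodAddSubgroup hGrc).closure_subset_iff.2 ((AddSubgroup.closure_le _).2 hsupp)
  refine ⟨hsupp, fun hdense => ⟨G 0, fun x => ?_⟩,
    fun d hd => hperiods (hd ▸ AddSubgroup.mem_zmultiples d)⟩
  simpa using hperiods (hdense ▸ mem_univ x) 0
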